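/- arXiv:2410.05154 — 2 statements merged into one kernel-verified Lean document; each statement's English description precedes it below -/
import Mathlib

section
/- Let f : GL(d,ℝ) → ℝ be an invariant function (k = 1) with variation function F : GL(d,ℝ) → M_d(ℝ). Then for every g ∈ GL(d,ℝ), the matrix F(g) commutes with g, i.e. g·F(g) = F(g)·g. -/
open Matrix

attribute [local instance] Matrix.normedAddCommGroup Matrix.normedSpace

noncomputable section

/-- An invariant function on `GL(d,ℝ)`: a real-valued function on `d × d` real matrices
that is differentiable on the open set of invertible matrices and invariant under
conjugation. -/
def IsInvariantFunOne (d : ℕ) (f : Matrix (Fin d) (Fin d) ℝ → ℝ) : Prop :=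
  DifferentiableOn ℝ f {g : Matrix (Fin d) (Fin d) ℝ | IsUnit g} ∧
  ∀ h : Matrix (Fin d) (Fin d) ℝ, IsUnit h →
    ∀ g : Matrix (Fin d) (Fin d) ℝ, IsUnit g → f (h * g * h⁻¹) = f g

/-- `F` is the variation function of `f : GL(d,ℝ) → ℝ` with respect to the trace form:
`tr (F g * X)` is the derivative at `t = 0` of `t ↦ f (exp(tX)·g)`, for every `X`. -/
def IsVariationFunOne (d : ℕ) (f : Matrix (Fin d) (Fin d) ℝ → ℝ)
    (F : Matrix (Fin d) (Fin d) ℝ → Matrix (Fin d) (Fin d) ℝ) : Prop :=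
  ∀ g : Matrix (Fin d) (Fin d) ℝ, IsUnit g → ∀ X : Matrix (Fin d) (Fin d) ℝ,
    HasDerivAt (fun t : ℝ => f (NormedSpace.exp (t • X) * g))
      (Matrix.trace (F g * X)) 0

/-! Invariance makes the curves `t ↦ f (exp (t • g X g⁻¹) * g)` and `t ↦ f (exp (t • X) * g)`
coincide, since `exp (t • g X g⁻¹) * g = g * exp (t • X)` is conjugate to `exp (t • X) * g`.
Comparing their derivatives at `0` gives `tr (F g * g X g⁻¹) = tr (F g * X)` for all `X`, i.e.
`tr ((g⁻¹ (F g) g - F g) * X) = 0`, and nondegeneracy of the trace form forces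
`g⁻¹ (F g) g = F g`. -/

namespace Matrix

variable {m 𝕂 R : Type*} [Fintype m] [DecidableEq m]

theorem exp_conj_of_isUnit [RCLike 𝕂] {g : Matrix m m 𝕂} (hg : IsUnit g) (X : Matrix m m 𝕂) :
    NormedSpace.exp (g * X * g⁻¹) = g * NormedSpace.exp X * g⁻¹ := by
  obtain ⟨u, rfl⟩ := hg
  rw [← coe_units_inv]
  exact exp_units_conj u X

theorem commute_of_trace_mul_conj [CommRing R] {g A : Matrix m m R} (hg : IsUnit g)
    (h : ∀ X, trace (A * (g * X * g⁻¹)) = trace (A * X)) : g * A = A * g := by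
  have hdet : IsUnit g.det := (isUnit_iff_isUnit_det g).mp hg
  have hconj : g⁻¹ * A * g = A := ext_iff_trace_mul_right.mpr fun X => by
    simp only [← h X, Matrix.mul_assoc]
    rw [trace_mul_comm]
    simp only [Matrix.mul_assoc]
  calc g * A = g * (g⁻¹ * A * g) := by rw [hconj]
    _ = A * g := by rw [← Matrix.mul_assoc, ← Matrix.mul_assoc, mul_nonsing_inv g hdet,
      Matrix.one_mul]

end Matrix

theorem IsInvariantFunOne.apply_mul_comm {d : ℕ} {f : Matrix (Fin d) (Fin d) ℝ → ℝ}
    (hf : IsInvariantFunOne d f) {g a : Matrix (Fin d) (Fin d) ℝ} (hg : IsUnit g)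
    (ha : IsUnit a) : f (g * a) = f (a * g) := by
  have hdet : IsUnit g.det := (isUnit_iff_isUnit_det g).mp hg
  rw [← hf.2 g hg (a * g) (ha.mul hg), Matrix.mul_assoc, Matrix.mul_assoc, mul_nonsing_inv g hdet,
    Matrix.mul_one]

theorem IsVariationFunOne.trace_mul_conj {d : ℕ} {f : Matrix (Fin d) (Fin d) ℝ → ℝ}
    {F : Matrix (Fin d) (Fin d) ℝ → Matrix (Fin d) (Fin d) ℝ} (hF : IsVariationFunOne d f F)
    (hf : IsInvariantFunOne d f) {g : Matrix (Fin d) (Fin d) ℝ} (hg : IsUnit g)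
    (X : Matrix (Fin d) (Fin d) ℝ) : trace (F g * (g * X * g⁻¹)) = trace (F g * X) := by
  have hdet : IsUnit g.det := (isUnit_iff_isUnit_det g).mp hg
  have hcurve : (fun t : ℝ => f (NormedSpace.exp (t • (g * X * g⁻¹)) * g))
      = fun t : ℝ => f (NormedSpace.exp (t • X) * g) := funext fun t => by
    rw [← smul_mul_assoc, ← mul_smul_comm, exp_conj_of_isUnit hg, Matrix.mul_assoc _ g⁻¹ g,
      nonsing_inv_mul g hdet, Matrix.mul_one, hf.apply_mul_comm hg (isUnit_exp _)]
  have hderiv := hF g hg (g * X * g⁻¹)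
  rw [hcurve] at hderiv
  exact hderiv.unique (hF g hg X)

/-- for an invariant function `f : GL(d,ℝ) → ℝ` with variation function `F`,
the matrix `F g` commutes with `g` for every invertible `g`. -/
theorem variation_function_commutes (d : ℕ)
    (f : Matrix (Fin d) (Fin d) ℝ → ℝ)
    (F : Matrix (Fin d) (Fin d) ℝ → Matrix (Fin d) (Fin d) ℝ)
    (hf : IsInvariantFunOne d f) (hF : IsVariationFunOne d f F)
    (g : Matrix (Fin d) (Fin d) ℝ) (hg : IsUnit g) :
    g * F g = F g * g :=
  commute_of_trace_mul_conj hg (hF.trace_mul_conj hf hg)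
end
end

section
/- Let Γ₁ and Γ₂ be groups with distinguished elements a₁ ∈ Γ₁ and a₂ ∈ Γ₂, and let π be the amalgamated product of Γ₁ and Γ₂ over ℤ along the homomorphisms ℤ → Γ_i sending 1 ↦ a_i, with canonical homomorphisms ι_i : Γ_i → π, and set a := ι₁(a₁) = ι₂(a₂). Let ρ : π → GL(d,ℝ) be a homomorphism, let f : GL(d,ℝ) → ℝ be an invariant function with variation function F, let n ≥ 1 and t ∈ ℝ, and put x_t := exp(t·n·F(ρ(a)ⁿ)). Then x_t commutes with ρ(a), and consequently there exists a (unique) group homomorphism Ξ_t : π → GL(d,ℝ) satisfying Ξ_t(ι₁(γ)) = ρ(ι₁(γ)) for all γ ∈ Γ₁ and Ξ_t(ι₂(γ)) = x_t·ρ(ι₂(γ))·x_t⁻¹ for all γ ∈ Γ₂; in particular Ξ_t(a) = ρ(a). (This is the representation-level content of the paper's description of the Hamiltonian flow of f_{αⁿ} for a separating simple closed curve α: the flow is covered by the generalized twist Ξ_t.) -/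
open Matrix

attribute [local instance] Matrix.normedAddCommGroup Matrix.normedSpace

noncomputable section

/-- The twist matrix `x_t = exp (t·n·F(aⁿ))`. -/
def twistMatrix (d : ℕ) (F : Matrix (Fin d) (Fin d) ℝ → Matrix (Fin d) (Fin d) ℝ)
    (n : ℕ) (t : ℝ) (a : Matrix (Fin d) (Fin d) ℝ) : Matrix (Fin d) (Fin d) ℝ :=
  NormedSpace.exp ((t * n) • F (a ^ n))

/-!
If a unit `U` commutes with `g`, conjugating the direction `X` by `U` does not change
`t ↦ f (exp(tX)·g)`, by invariance of `f`; comparing derivatives, `U⁻¹ F(g) U` and `F(g)` have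
the same trace pairing with every `X`, so `U` commutes with `F(g)`. Taking `U = a` and
`g = aⁿ`, the twist `x_t = exp(t·n·F(aⁿ))` commutes with `a`. Hence `ρ` on `Γ₁` and
`x_t ρ(·) x_t⁻¹` on `Γ₂` agree on the amalgamated `ℤ`, and glue by the universal property.
-/

section Variation

variable {d : ℕ} {f : Matrix (Fin d) (Fin d) ℝ → ℝ}
  {F : Matrix (Fin d) (Fin d) ℝ → Matrix (Fin d) (Fin d) ℝ}

lemma IsVariationFunOne.commute_of_commute
    (hf : ∀ h : Matrix (Fin d) (Fin d) ℝ, IsUnit h →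
      ∀ g : Matrix (Fin d) (Fin d) ℝ, IsUnit g → f (h * g * h⁻¹) = f g)
    (hF : IsVariationFunOne d f F) {g U : Matrix (Fin d) (Fin d) ℝ} (hg : IsUnit g)
    (hU : IsUnit U) (hUg : Commute U g) :
    Commute U (F g) := by
  have hU_inv : Commute U⁻¹ g := by
    obtain ⟨u, rfl⟩ := hU
    rw [← Matrix.coe_units_inv]
    exact hUg.units_inv_left
  have hcurve : ∀ X : Matrix (Fin d) (Fin d) ℝ,
      (fun t : ℝ => f (NormedSpace.exp (t • (U * X * U⁻¹)) * g)) =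
        fun t : ℝ => f (NormedSpace.exp (t • X) * g) := by
    intro X
    funext t
    have hsmul : t • (U * X * U⁻¹) = U * (t • X) * U⁻¹ := by
      simp only [Matrix.mul_smul, Matrix.smul_mul]
    rw [hsmul, Matrix.exp_conj _ _ hU, mul_assoc _ _ g, hU_inv.eq, ← mul_assoc,
      mul_assoc U]
    exact hf U hU _ ((Matrix.isUnit_exp _).mul hg)
  have hconj : U⁻¹ * F g * U = F g := by
    refine Matrix.ext_iff_trace_mul_right.2 fun X => ?_
    have htrace := (hF g hg (U * X * U⁻¹)).unique (hcurve X ▸ hF g hg X)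
    rw [← htrace, mul_assoc, mul_assoc, Matrix.trace_mul_comm]
    simp only [mul_assoc]
  calc U * F g = U * (U⁻¹ * F g * U) := by rw [hconj]
    _ = F g * U := by
      rw [← mul_assoc, ← mul_assoc,
        Matrix.mul_nonsing_inv _ ((Matrix.isUnit_iff_isUnit_det U).mp hU), one_mul]

lemma commute_twistMatrix
    (hf : ∀ h : Matrix (Fin d) (Fin d) ℝ, IsUnit h →
      ∀ g : Matrix (Fin d) (Fin d) ℝ, IsUnit g → f (h * g * h⁻¹) = f g)
    (hF : IsVariationFunOne d f F) (n : ℕ) (t : ℝ) {A : Matrix (Fin d) (Fin d) ℝ}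
    (hA : IsUnit A) : Commute A (twistMatrix d F n t A) :=
  ((hF.commute_of_commute hf (hA.pow n) hA ((Commute.refl A).pow_right n)).smul_right
    _).exp_right

end Variation

theorem existsUnique_twist_of_commute {Γ₁ Γ₂ π G : Type*} [Group Γ₁] [Group Γ₂] [Group π]
    [Group G] {a₁ : Γ₁} {a₂ : Γ₂} {ι₁ : Γ₁ →* π} {ι₂ : Γ₂ →* π} (hbase : ι₁ a₁ = ι₂ a₂)
    (huniv : ∀ (f₁ : Γ₁ →* G) (f₂ : Γ₂ →* G),
      f₁ a₁ = f₂ a₂ → ∃! Φ : π →* G, Φ.comp ι₁ = f₁ ∧ Φ.comp ι₂ = f₂)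
    (ρ : π →* G) {w : G} (hw : Commute w (ρ (ι₁ a₁))) :
    ∃! Ξ : π →* G, (∀ γ, Ξ (ι₁ γ) = ρ (ι₁ γ)) ∧ ∀ γ, Ξ (ι₂ γ) = w * ρ (ι₂ γ) * w⁻¹ := by
  have hcompat : (ρ.comp ι₁) a₁ = ((MulAut.conj w).toMonoidHom.comp (ρ.comp ι₂)) a₂ := by
    simp only [MonoidHom.comp_apply, MulEquiv.coe_toMonoidHom, MulAut.conj_apply]
    rw [← hbase, hw.eq, mul_inv_cancel_right]
  refine (existsUnique_congr fun Ξ => ?_).1 (huniv _ _ hcompat)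
  simp only [DFunLike.ext_iff, MonoidHom.comp_apply, MulEquiv.coe_toMonoidHom,
    MulAut.conj_apply]

theorem generalized_twist_amalgamated_product_general
    {Γ₁ Γ₂ π : Type} [Group Γ₁] [Group Γ₂] [Group π]
    (a₁ : Γ₁) (a₂ : Γ₂) (ι₁ : Γ₁ →* π) (ι₂ : Γ₂ →* π)
    (hbase : ι₁ a₁ = ι₂ a₂)
    (huniv : ∀ (H : Type) [Group H], ∀ (f₁ : Γ₁ →* H) (f₂ : Γ₂ →* H),
      f₁ a₁ = f₂ a₂ → ∃! Φ : π →* H, Φ.comp ι₁ = f₁ ∧ Φ.comp ι₂ = f₂)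
    (d : ℕ) (ρ : π →* Matrix.GeneralLinearGroup (Fin d) ℝ)
    (f : Matrix (Fin d) (Fin d) ℝ → ℝ)
    (F : Matrix (Fin d) (Fin d) ℝ → Matrix (Fin d) (Fin d) ℝ)
    (hf : IsInvariantFunOne d f) (hF : IsVariationFunOne d f F)
    (n : ℕ) (t : ℝ) :
    twistMatrix d F n t (ρ (ι₁ a₁)) * (ρ (ι₁ a₁) : Matrix (Fin d) (Fin d) ℝ) =
      (ρ (ι₁ a₁) : Matrix (Fin d) (Fin d) ℝ) * twistMatrix d F n t (ρ (ι₁ a₁)) ∧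
    ∃! Ξ : π →* Matrix.GeneralLinearGroup (Fin d) ℝ,
      (∀ γ : Γ₁, (Ξ (ι₁ γ) : Matrix (Fin d) (Fin d) ℝ)
          = (ρ (ι₁ γ) : Matrix (Fin d) (Fin d) ℝ)) ∧
      (∀ γ : Γ₂, (Ξ (ι₂ γ) : Matrix (Fin d) (Fin d) ℝ)
          = twistMatrix d F n t (ρ (ι₁ a₁)) * (ρ (ι₂ γ) : Matrix (Fin d) (Fin d) ℝ) *
            (twistMatrix d F n t (ρ (ι₁ a₁)))⁻¹) := by
  set x := twistMatrix d F n t (ρ (ι₁ a₁))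
  have hcomm : Commute (ρ (ι₁ a₁) : Matrix (Fin d) (Fin d) ℝ) x :=
    commute_twistMatrix hf.2 hF n t (ρ (ι₁ a₁)).isUnit
  refine ⟨hcomm.eq.symm, ?_⟩
  set w : GL (Fin d) ℝ := (Matrix.isUnit_exp _ : IsUnit x).unit
  have hw : (w : Matrix (Fin d) (Fin d) ℝ) = x := IsUnit.unit_spec _
  have hw_inv : ((w⁻¹ : GL (Fin d) ℝ) : Matrix (Fin d) (Fin d) ℝ) = x⁻¹ := by
    rw [Matrix.coe_units_inv, hw]
  have hwA : Commute w (ρ (ι₁ a₁)) := Units.ext (by simpa [hw] using hcomm.symm.eq)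
  refine (existsUnique_congr fun Ξ => ?_).1
    (existsUnique_twist_of_commute hbase (huniv _) ρ hwA)
  simp only [Units.ext_iff, Units.val_mul, hw, hw_inv]

/-- let `π` be the amalgamated product of `Γ₁` and `Γ₂` over `ℤ` along
`1 ↦ a₁` and `1 ↦ a₂` (expressed by its universal property), `ρ : π → GL(d,ℝ)` a
homomorphism, `f` an invariant function with variation function `F`, and
`x_t = exp (t·n·F(ρ(a)ⁿ))` where `a = ι₁ a₁ = ι₂ a₂`. Then `x_t` commutes with `ρ(a)`,
and there is a unique homomorphism `Ξ_t : π → GL(d,ℝ)` equal to `ρ` on `Γ₁` and to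
`x_t · ρ(·) · x_t⁻¹` on `Γ₂`. -/
theorem generalized_twist_amalgamated_product
    {Γ₁ Γ₂ π : Type} [Group Γ₁] [Group Γ₂] [Group π]
    (a₁ : Γ₁) (a₂ : Γ₂) (ι₁ : Γ₁ →* π) (ι₂ : Γ₂ →* π)
    (hbase : ι₁ a₁ = ι₂ a₂)
    (huniv : ∀ (H : Type) [Group H], ∀ (f₁ : Γ₁ →* H) (f₂ : Γ₂ →* H),
      f₁ a₁ = f₂ a₂ → ∃! Φ : π →* H, Φ.comp ι₁ = f₁ ∧ Φ.comp ι₂ = f₂)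
    (d : ℕ) (ρ : π →* Matrix.GeneralLinearGroup (Fin d) ℝ)
    (f : Matrix (Fin d) (Fin d) ℝ → ℝ)
    (F : Matrix (Fin d) (Fin d) ℝ → Matrix (Fin d) (Fin d) ℝ)
    (hf : IsInvariantFunOne d f) (hF : IsVariationFunOne d f F)
    (n : ℕ) (hn : 0 < n) (t : ℝ) :
    twistMatrix d F n t (ρ (ι₁ a₁)) * (ρ (ι₁ a₁) : Matrix (Fin d) (Fin d) ℝ) =
      (ρ (ι₁ a₁) : Matrix (Fin d) (Fin d) ℝ) * twistMatrix d F n t (ρ (ι₁ a₁)) ∧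
    ∃! Ξ : π →* Matrix.GeneralLinearGroup (Fin d) ℝ,
      (∀ γ : Γ₁, (Ξ (ι₁ γ) : Matrix (Fin d) (Fin d) ℝ)
          = (ρ (ι₁ γ) : Matrix (Fin d) (Fin d) ℝ)) ∧
      (∀ γ : Γ₂, (Ξ (ι₂ γ) : Matrix (Fin d) (Fin d) ℝ)
          = twistMatrix d F n t (ρ (ι₁ a₁)) * (ρ (ι₂ γ) : Matrix (Fin d) (Fin d) ℝ) *
            (twistMatrix d F n t (ρ (ι₁ a₁)))⁻¹) :=
  generalized_twist_amalgamated_product_general a₁ a₂ ι₁ ι₂ hbase huniv d ρ f F hf hF n t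
end
end
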